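/- Let −1 < p ≤ 0. For all real x, 𝓘_{p+1}(x) ≤ (1 + (p+1)·𝓘_p(x))/(p+2). -/

import Mathlib

open Real

noncomputable def besselJn (p x : ℝ) : ℝ :=
  ∑' n : ℕ, (-(1:ℝ)/4)^n * x^(2*n) / ((Real.Gamma (p+n+1) / Real.Gamma (p+1)) * n.factorial)

noncomputable def besselIn (p x : ℝ) : ℝ :=
  ∑' n : ℕ, ((1:ℝ)/4)^n * x^(2*n) / ((Real.Gamma (p+n+1) / Real.Gamma (p+1)) * n.factorial)

noncomputable def besselJ (p x : ℝ) : ℝ :=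
  ∑' n : ℕ, (-1:ℝ)^n * (x/2)^(p+2*n) / (n.factorial * Real.Gamma (p+n+1))


/-!
Both sides are power series in `x²/4` with nonnegative coefficients. The `n`-th coefficients
`a_n(q)` of `𝓘_q` satisfy `(p + n + 1) a_n(p + 1) = (p + 1) a_n(p)`, so
`(p + 2) a_n(p + 1) ≤ (p + 1) a_n(p)` for `n ≥ 1`, while the constant terms of
`(p + 2) 𝓘_{p+1}` and `1 + (p + 1) 𝓘_p` are both `p + 2`. Comparing the series termwise gives
the inequality.
-/

noncomputable def besselITerm (p x : ℝ) (n : ℕ) : ℝ :=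
  ((1:ℝ)/4)^n * x^(2*n) / ((Real.Gamma (p+n+1) / Real.Gamma (p+1)) * n.factorial)

section
variable {p : ℝ} (x : ℝ)

lemma add_natCast_add_one_pos (hp : -1 < p) (n : ℕ) : 0 < p + n + 1 := by
  linarith [(n.cast_nonneg : (0:ℝ) ≤ n)]

lemma Gamma_add_natCast_add_one_pos (hp : -1 < p) (n : ℕ) : 0 < Gamma (p + n + 1) :=
  Gamma_pos_of_pos (add_natCast_add_one_pos hp n)

lemma Gamma_add_one_pos (hp : -1 < p) : 0 < Gamma (p + 1) := by
  simpa using Gamma_add_natCast_add_one_pos hp 0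

lemma besselITerm_nonneg (hp : -1 < p) (n : ℕ) : 0 ≤ besselITerm p x n := by
  have := Gamma_add_natCast_add_one_pos hp n
  have := Gamma_add_one_pos hp
  rw [besselITerm, pow_mul]
  positivity

lemma besselITerm_zero (hp : -1 < p) : besselITerm p x 0 = 1 := by
  simp [besselITerm, (Gamma_add_one_pos hp).ne']

lemma besselITerm_succ (hp : -1 < p) (n : ℕ) :
    besselITerm p x (n + 1) = besselITerm p x n * (x^2/4) / ((p + n + 1) * (n + 1)) := by
  have hG := (Gamma_add_natCast_add_one_pos hp n).ne'
  have hG₀ := (Gamma_add_one_pos hp).ne'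
  have hpn := (add_natCast_add_one_pos hp n).ne'
  have hΓ : Gamma (p + (n + 1 : ℕ) + 1) = (p + n + 1) * Gamma (p + n + 1) := by
    rw [Nat.cast_succ, ← Gamma_add_one hpn]; ring_nf
  rw [besselITerm, besselITerm, hΓ, Nat.factorial_succ, Nat.cast_mul, Nat.cast_succ]
  field_simp
  ring

lemma summable_besselITerm (hp : -1 < p) : Summable (besselITerm p x) := by
  refine summable_of_ratio_norm_eventually_le (by norm_num : (1:ℝ)/2 < 1) ?_
  filter_upwards [Filter.eventually_ge_atTop (⌈x^2/2⌉₊ + 1)] with n hn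
  have hn' : x^2/2 + 1 ≤ n := by
    have := Nat.le_ceil (x^2/2)
    have : ((⌈x^2/2⌉₊ + 1 : ℕ) : ℝ) ≤ n := by exact_mod_cast hn
    push_cast at this; linarith
  have h₀ := besselITerm_nonneg x hp n
  rw [Real.norm_of_nonneg (besselITerm_nonneg x hp _), Real.norm_of_nonneg h₀,
    besselITerm_succ x hp, mul_div_assoc]
  have hratio : x^2/4 / ((p + n + 1) * (n + 1)) ≤ 1/2 := by
    rw [div_le_iff₀ (by nlinarith)]
    nlinarith
  calc besselITerm p x n * (x^2/4 / ((p + n + 1) * (n + 1))) ≤ besselITerm p x n * (1/2) :=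
        mul_le_mul_of_nonneg_left hratio h₀
    _ = 1/2 * besselITerm p x n := mul_comm _ _

lemma besselITerm_add_one (hp : -1 < p) (n : ℕ) :
    (p + n + 1) * besselITerm (p + 1) x n = (p + 1) * besselITerm p x n := by
  have hG := (Gamma_add_natCast_add_one_pos hp n).ne'
  have hG₀ := (Gamma_add_one_pos hp).ne'
  have hpn := (add_natCast_add_one_pos hp n).ne'
  have hp1 : p + 1 ≠ 0 := by linarith
  have hΓ : Gamma (p + 1 + n + 1) = (p + n + 1) * Gamma (p + n + 1) := by
    rw [← Gamma_add_one hpn]; ring_nf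
  rw [besselITerm, besselITerm, hΓ, Gamma_add_one hp1]
  field_simp

lemma add_two_mul_besselITerm_succ_le (hp : -1 < p) (n : ℕ) :
    (p + 2) * besselITerm (p + 1) x (n + 1) ≤ (p + 1) * besselITerm p x (n + 1) := by
  rw [← besselITerm_add_one x hp]
  refine mul_le_mul_of_nonneg_right ?_ (besselITerm_nonneg x (by linarith) _)
  push_cast
  linarith [(n.cast_nonneg : (0:ℝ) ≤ n)]

lemma besselIn_eq_one_add_tsum (hp : -1 < p) :
    besselIn p x = 1 + ∑' n, besselITerm p x (n + 1) := by
  rw [← besselITerm_zero x hp]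
  exact (summable_besselITerm x hp).tsum_eq_zero_add

end

theorem cusa_type_modified_general (p : ℝ) (hp1 : -1 < p) (x : ℝ) :
    besselIn (p+1) x ≤ (1 + (p+1) * besselIn p x) / (p+2) := by
  have hp : -1 < p + 1 := by linarith
  have htail : (p + 2) * ∑' n, besselITerm (p + 1) x (n + 1)
      ≤ (p + 1) * ∑' n, besselITerm p x (n + 1) := by
    rw [← tsum_mul_left, ← tsum_mul_left]
    refine Summable.tsum_le_tsum (add_two_mul_besselITerm_succ_le x hp1)
      (((summable_nat_add_iff 1).2 (summable_besselITerm x hp)).mul_left _)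
      (((summable_nat_add_iff 1).2 (summable_besselITerm x hp1)).mul_left _)
  rw [le_div_iff₀ (by linarith), besselIn_eq_one_add_tsum x hp, besselIn_eq_one_add_tsum x hp1]
  linarith

theorem cusa_type_modified (p : ℝ) (hp1 : -1 < p) (hp2 : p ≤ 0) (x : ℝ) :
    besselIn (p+1) x ≤ (1 + (p+1) * besselIn p x) / (p+2) :=
  cusa_type_modified_general p hp1 x
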